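/- Let S ⊆ E be a closed prox-regular set with nonempty interior, let x ∈ ∂S, and suppose there exist an open neighborhood U of x and a C² function ψ : U → ℝ with Dψ(u) ≠ 0 for every u ∈ U, such that U ∩ ∂S = ψ⁻¹(0) and ψ(y) ≤ 0 for every y ∈ U ∩ S. Assume moreover that every neighborhood V ⊆ U of x meets the interior of S. Set Ŝ := (E \ S) ∪ ∂S. Then N^P_Ŝ(x) = {λ(−∇ψ(x)) : λ ≥ 0}. -/

import Mathlib

open Filter Topology Metric Set
open scoped RealInnerProductSpace NNReal

variable {E : Type*} [NormedAddCommGroup E] [InnerProductSpace ℝ E]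

/-- The proximal normal cone to a set `S` at a point `x`. -/
def proxNormalCone (S : Set E) (x : E) : Set E :=
  {ξ | ∃ σ : ℝ, 0 < σ ∧ ∃ U ∈ 𝓝 x, ∀ y ∈ S ∩ U, ⟪ξ, y - x⟫ ≤ σ * ‖y - x‖ ^ 2}

/-- The Bouligand (contingent) tangent cone to `S` at `x`. -/
def bouligandCone (S : Set E) (x : E) : Set E :=
  {v | ∃ (z : ℕ → E) (t : ℕ → ℝ), (∀ i, z i ∈ S) ∧ (∀ i, 0 < t i) ∧
    Tendsto z atTop (𝓝 x) ∧ Tendsto t atTop (𝓝 0) ∧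
    Tendsto (fun i => (t i)⁻¹ • (z i - x)) atTop (𝓝 v)}

/-- The polar cone of a set `K`. -/
def polarCone (K : Set E) : Set E := {v | ∀ w ∈ K, ⟪v, w⟫ ≤ 0}

/-- `S` is `φ`-convex for a continuous nonnegative function `φ` on `S`. -/
def IsPhiConvex (S : Set E) (φ : E → ℝ) : Prop :=
  ContinuousOn φ S ∧ (∀ x ∈ S, 0 ≤ φ x) ∧
  ∀ x ∈ S, ∃ U ∈ 𝓝 x, ∀ ξ ∈ proxNormalCone S x, ∀ y ∈ S ∩ U,
    ⟪ξ, y - x⟫ ≤ φ x * ‖ξ‖ * ‖y - x‖ ^ 2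

/-- `S` is prox-regular if it is `φ`-convex for some continuous `φ : S → [0,∞)`. -/
def ProxRegular (S : Set E) : Prop := ∃ φ : E → ℝ, IsPhiConvex S φ

/-!
The set `Sᶜ ∪ frontier S` is the complement of `interior S`. Points of `U` where `ψ > 0` lie
outside `S`, so every proximal normal at `x` pairs nonpositively with each direction `v` satisfying
`⟪∇ψ(x), v⟫ > 0`, which forces it onto the ray spanned by `-∇ψ(x)`. Conversely, all points near `x`
with `ψ < 0` lie in one connected component of `U ∩ {ψ < 0}`: descend from each of them along a
fixed direction in which `Dψ < 0` into a small ball on which `ψ < 0`. That component avoids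
`frontier S` and meets `interior S`, so it lies in `interior S`. Hence `ψ ≥ 0` off `interior S`
near `x`, and the second-order Taylor bound for `ψ` makes `-∇ψ(x)` a proximal normal.
-/

theorem IsPreconnected.subset_interior_of_disjoint_frontier {X : Type*} [TopologicalSpace X]
    {s t : Set X} (hs : IsPreconnected s) (hst : Disjoint s (frontier t))
    (hne : (s ∩ interior t).Nonempty) : s ⊆ interior t :=
  hs.subset_of_closure_inter_subset isOpen_interior hne fun _ ⟨hcl, hs⟩ =>
    by_contra fun hint => Set.disjoint_left.1 hst hs
      (frontier_interior_subset ⟨hcl, by rwa [interior_interior]⟩)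

theorem compl_union_frontier_eq_compl_interior {X : Type*} [TopologicalSpace X] (s : Set X) :
    sᶜ ∪ frontier s = (interior s)ᶜ := by
  rw [← closure_compl, closure_eq_self_union_frontier, frontier_compl]

section NormedSpace

variable {F : Type*} [NormedAddCommGroup F] [NormedSpace ℝ F]

theorem tendsto_add_smul_nhdsGT_zero (x v : F) :
    Tendsto (fun t : ℝ => x + t • v) (𝓝[>] 0) (𝓝 x) := by
  have : Continuous fun t : ℝ => x + t • v := by fun_prop
  simpa using (this.tendsto 0).mono_left nhdsWithin_le_nhds

theorem HasFDerivAt.eventually_lt_add_smul {f : F → ℝ} {f' : F →L[ℝ] ℝ} {x v : F}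
    (hf : HasFDerivAt f f' x) (hv : 0 < f' v) :
    ∀ᶠ t in 𝓝[>] (0 : ℝ), f x < f (x + t • v) := by
  have hline : HasDerivAt (fun t : ℝ => x + t • v) v 0 := by
    simpa using ((hasDerivAt_id (0 : ℝ)).smul_const v).const_add x
  have hslope := (hf.comp_hasDerivAt_of_eq 0 hline (by simp)).tendsto_slope_zero_right
  filter_upwards [hslope.eventually_const_lt hv, self_mem_nhdsWithin] with t hpos (ht : 0 < t)
  simp only [Function.comp_apply, zero_add, zero_smul, add_zero, smul_eq_mul] at hpos
  exact sub_pos.1 (pos_of_mul_pos_right hpos (inv_pos.2 ht).le)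

theorem Convex.apply_add_smul_lt_of_fderiv_neg {f : F → ℝ} {C : Set F} {d u : F} {t : ℝ}
    (hC : Convex ℝ C) (hf : ∀ z ∈ C, DifferentiableAt ℝ f z ∧ fderiv ℝ f z d < 0)
    (hu : u ∈ C) (hut : u + t • d ∈ C) (ht : 0 < t) : f (u + t • d) < f u := by
  obtain ⟨z, hz, hmvt⟩ :=
    domain_mvt (fun z hz => (hf z hz).1.hasFDerivAt.hasFDerivWithinAt) hC hu hut
  rw [← sub_neg, hmvt, add_sub_cancel_left, map_smul, smul_eq_mul]
  exact mul_neg_of_pos_of_neg ht (hf z (hC.segment_subset hu hut hz)).2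

theorem ContDiffAt.isBigO_sub_sub_fderiv {G : Type*} [NormedAddCommGroup G] [NormedSpace ℝ G]
    {f : F → G} {x : F} (hf : ContDiffAt ℝ 2 f x) :
    (fun y => f y - f x - fderiv ℝ f x (y - x)) =O[𝓝 x] fun y => ‖y - x‖ ^ 2 := by
  obtain ⟨C, hC, hlip⟩ :=
    ((hf.fderiv_right (m := 1) le_rfl).differentiableAt one_ne_zero).isBigO_sub.exists_pos
  obtain ⟨r, hr, hball⟩ :=
    Metric.eventually_nhds_iff_ball.1 ((hf.eventually (by simp)).and hlip.bound)
  refine Asymptotics.IsBigO.of_bound C ?_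
  filter_upwards [ball_mem_nhds x hr] with y hy
  have hseg : segment ℝ x y ⊆ ball x r := (convex_ball x r).segment_subset (mem_ball_self hr) hy
  calc ‖f y - f x - fderiv ℝ f x (y - x)‖ ≤ C * ‖y - x‖ * ‖y - x‖ :=
        (convex_segment x y).norm_image_sub_le_of_norm_hasFDerivWithin_le'
          (fun z hz =>
            ((hball z (hseg hz)).1.differentiableAt (by simp)).hasFDerivAt.hasFDerivWithinAt)
          (fun z hz => (hball z (hseg hz)).2.trans
            (by gcongr; simpa only [norm_norm] using norm_sub_le_of_mem_segment hz))
          (left_mem_segment ℝ x y) (right_mem_segment ℝ x y)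
    _ = C * ‖‖y - x‖ ^ 2‖ := by rw [norm_pow, norm_norm]; ring

theorem ContDiffAt.exists_eventually_fderiv_apply_neg {ψ : F → ℝ} {x : F}
    (hψ : ContDiffAt ℝ 1 ψ x) (hD : fderiv ℝ ψ x ≠ 0) :
    ∃ d, ∀ᶠ z in 𝓝 x, DifferentiableAt ℝ ψ z ∧ fderiv ℝ ψ z d < 0 := by
  obtain ⟨d, hd⟩ : ∃ d, fderiv ℝ ψ x d < 0 := by
    obtain ⟨v, hv⟩ := DFunLike.ne_iff.1 hD
    rcases (hv : fderiv ℝ ψ x v ≠ 0).lt_or_gt with h | h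
    exacts [⟨v, h⟩, ⟨-v, by simpa using h⟩]
  have hcont : ContinuousAt (fun z => fderiv ℝ ψ z d) x :=
    (hψ.continuousAt_fderiv one_ne_zero).clm_apply continuousAt_const
  exact ⟨d, ((hψ.eventually (by simp)).mono fun z hz => hz.differentiableAt one_ne_zero).and
    (hcont.eventually_lt continuousAt_const hd)⟩

theorem ContDiffAt.exists_eventually_mem_connectedComponentIn {ψ : F → ℝ} {U : Set F} {x : F}
    (hψ : ContDiffAt ℝ 1 ψ x) (hD : fderiv ℝ ψ x ≠ 0) (hψx : ψ x = 0) (hU : U ∈ 𝓝 x) :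
    ∃ z, ∀ᶠ y in 𝓝 x, ψ y < 0 → y ∈ connectedComponentIn (U ∩ {y | ψ y < 0}) z := by
  obtain ⟨d, hd⟩ := hψ.exists_eventually_fderiv_apply_neg hD
  obtain ⟨r, hr, hball⟩ := Metric.eventually_nhds_iff_ball.1 ((eventually_mem_set.2 hU).and hd)
  have hdesc {u : F} {t : ℝ} := (convex_ball x r).apply_add_smul_lt_of_fderiv_neg
    (fun z hz => (hball z hz).2) (u := u) (t := t)
  obtain ⟨s, hsr, hs⟩ : ∃ s, x + s • d ∈ ball x r ∧ 0 < s :=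
    (((tendsto_add_smul_nhdsGT_zero x d).eventually (ball_mem_nhds x hr)).and
      self_mem_nhdsWithin).exists
  have hψs : ψ (x + s • d) < 0 := hψx ▸ hdesc (mem_ball_self hr) hsr hs
  obtain ⟨ρ, hρ, hρball⟩ := Metric.eventually_nhds_iff_ball.1 <|
    (isOpen_ball.eventually_mem hsr).and
      ((hball _ hsr).2.1.continuousAt.eventually_lt continuousAt_const hψs)
  have hρsub : ball (x + s • d) ρ ⊆ U ∩ {y | ψ y < 0} := fun z hz =>
    ⟨(hball z (hρball z hz).1).1, (hρball z hz).2⟩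
  refine ⟨x + s • d, ?_⟩
  filter_upwards [ball_mem_nhds x (lt_min hr hρ)] with y hy hψy
  have hyr : y ∈ ball x r := ball_subset_ball (min_le_left r ρ) hy
  have hyρ : y + s • d ∈ ball (x + s • d) ρ := by
    rw [mem_ball, dist_add_right]; exact ball_subset_ball (min_le_right r ρ) hy
  have hray : (fun t : ℝ => y + t • d) '' Icc 0 s ⊆ U ∩ {y | ψ y < 0} := by
    rintro _ ⟨t, ht, rfl⟩
    have hyt : y + t • d ∈ ball x r := by
      have := (convex_ball x r).add_smul_mem hyr (hρball _ hyρ).1 (t := t / s)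
        ⟨div_nonneg ht.1 hs.le, (div_le_one hs).2 ht.2⟩
      rwa [smul_smul, div_mul_cancel₀ t hs.ne'] at this
    refine ⟨(hball _ hyt).1, ?_⟩
    rcases ht.1.eq_or_lt with rfl | htpos
    · simpa using hψy
    · exact (hdesc hyr hyt htpos).trans hψy
  have hray_conn : IsPreconnected ((fun t : ℝ => y + t • d) '' Icc 0 s) :=
    isPreconnected_Icc.image _ (by fun_prop : Continuous fun t : ℝ => y + t • d).continuousOn
  have hpath : IsPreconnected ((fun t : ℝ => y + t • d) '' Icc 0 s ∪ ball (x + s • d) ρ) :=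
    hray_conn.union (y + s • d) ⟨s, right_mem_Icc.2 hs.le, rfl⟩ hyρ (convex_ball _ _).isPreconnected
  exact hpath.subset_connectedComponentIn (Or.inr (mem_ball_self hρ)) (union_subset hray hρsub)
    (Or.inl ⟨0, left_mem_Icc.2 hs.le, by simp⟩)

theorem ContDiffAt.eventually_nonneg_of_notMem_interior {S U : Set F} {ψ : F → ℝ} {x : F}
    (hψ : ContDiffAt ℝ 1 ψ x) (hD : fderiv ℝ ψ x ≠ 0) (hψx : ψ x = 0) (hU : U ∈ 𝓝 x)
    (hfr : ∀ y ∈ U ∩ frontier S, ψ y = 0) (hx : x ∈ closure (interior S ∩ {y | ψ y < 0})) :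
    ∀ᶠ y in 𝓝 x, y ∉ interior S → 0 ≤ ψ y := by
  obtain ⟨z, hz⟩ := hψ.exists_eventually_mem_connectedComponentIn hD hψx hU
  have hK : connectedComponentIn (U ∩ {y | ψ y < 0}) z ⊆ interior S := by
    obtain ⟨p, hp, hpS, hpψ⟩ := mem_closure_iff_nhds.1 hx _ hz
    refine isPreconnected_connectedComponentIn.subset_interior_of_disjoint_frontier
      (Set.disjoint_left.2 fun y hy hyfr => ?_) ⟨p, hp hpψ, hpS⟩
    obtain ⟨hyU, hyψ⟩ := connectedComponentIn_subset _ _ hy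
    exact hyψ.ne (hfr y ⟨hyU, hyfr⟩)
  filter_upwards [hz] with y hy hyS
  by_contra! hψy
  exact hyS (hK (hy hψy))

end NormedSpace

theorem inner_nonpos_of_mem_proxNormalCone {T : Set E} {x ξ v : E}
    (hξ : ξ ∈ proxNormalCone T x) (hv : ∀ᶠ t in 𝓝[>] (0 : ℝ), x + t • v ∈ T) : ⟪ξ, v⟫ ≤ 0 := by
  obtain ⟨σ, -, V, hV, hσ⟩ := hξ
  have hlim : Tendsto (fun t : ℝ => σ * t * ‖v‖ ^ 2) (𝓝[>] 0) (𝓝 0) := by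
    have : Continuous fun t : ℝ => σ * t * ‖v‖ ^ 2 := by fun_prop
    simpa using (this.tendsto 0).mono_left nhdsWithin_le_nhds
  refine ge_of_tendsto hlim ?_
  filter_upwards [hv, (tendsto_add_smul_nhdsGT_zero x v).eventually hV, self_mem_nhdsWithin]
    with t hT hV (ht : 0 < t)
  have := hσ _ ⟨hT, hV⟩
  rw [add_sub_cancel_left, real_inner_smul_right, norm_smul, Real.norm_of_nonneg ht.le] at this
  nlinarith

theorem exists_nonneg_smul_neg_of_inner_nonpos {w ξ : E} (hw : w ≠ 0)
    (h : ∀ v, 0 < ⟪w, v⟫ → ⟪ξ, v⟫ ≤ 0) : ∃ l : ℝ, 0 ≤ l ∧ ξ = l • -w := by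
  have hw' : 0 < ⟪w, w⟫ := real_inner_self_pos.2 hw
  have h' : ∀ v, 0 ≤ ⟪w, v⟫ → ⟪ξ, v⟫ ≤ 0 := fun v hv => by
    have hlim : Tendsto (fun t : ℝ => ⟪ξ, v + t • w⟫) (𝓝[>] 0) (𝓝 ⟪ξ, v⟫) :=
      tendsto_const_nhds.inner (tendsto_add_smul_nhdsGT_zero v w)
    refine le_of_tendsto hlim ?_
    filter_upwards [self_mem_nhdsWithin] with t (ht : 0 < t)
    refine h _ ?_
    rw [inner_add_right, real_inner_smul_right]
    positivity
  have hspan : ξ ∈ (ℝ ∙ w)ᗮᗮ := fun v hv => by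
    rw [Submodule.mem_orthogonal_singleton_iff_inner_right] at hv
    refine le_antisymm ?_ ?_
    · rw [real_inner_comm]; exact h' v hv.ge
    · have := h' (-v) (by rw [inner_neg_right, hv, neg_zero])
      rw [inner_neg_right, real_inner_comm] at this
      linarith
  obtain ⟨a, rfl⟩ := Submodule.mem_span_singleton.1
    ((Submodule.orthogonal_orthogonal (ℝ ∙ w)) ▸ hspan)
  have ha : a * ⟪w, w⟫ ≤ 0 := by simpa [real_inner_smul_left] using h' w hw'.le
  exact ⟨-a, by nlinarith, by rw [neg_smul_neg]⟩

theorem proxNormalCone_subset_of_eventually_lt_mem [CompleteSpace E] {T : Set E} {ψ : E → ℝ}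
    {x w : E} (hψ : HasGradientAt ψ w x) (hw : w ≠ 0) (hT : ∀ᶠ y in 𝓝 x, ψ x < ψ y → y ∈ T) :
    proxNormalCone T x ⊆ {ξ | ∃ l : ℝ, 0 ≤ l ∧ ξ = l • -w} := fun ξ hξ => by
  refine exists_nonneg_smul_neg_of_inner_nonpos hw fun v hv =>
    inner_nonpos_of_mem_proxNormalCone hξ ?_
  have hv' : 0 < InnerProductSpace.toDual ℝ E w v := by
    rwa [InnerProductSpace.toDual_apply_apply]
  filter_upwards [(hasGradientAt_iff_hasFDerivAt.1 hψ).eventually_lt_add_smul hv',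
    (tendsto_add_smul_nhdsGT_zero x v).eventually hT] with t hlt hmem using hmem hlt

theorem smul_mem_proxNormalCone {T : Set E} {x ξ : E} (hξ : ξ ∈ proxNormalCone T x) {l : ℝ}
    (hl : 0 ≤ l) : l • ξ ∈ proxNormalCone T x := by
  obtain ⟨σ, hσ, V, hV, hξ⟩ := hξ
  refine ⟨l * σ + 1, by positivity, V, hV, fun y hy => ?_⟩
  rw [real_inner_smul_left]
  nlinarith [mul_le_mul_of_nonneg_left (hξ y hy) hl, sq_nonneg ‖y - x‖]

theorem neg_gradient_mem_proxNormalCone [CompleteSpace E] {T : Set E} {ψ : E → ℝ} {x : E}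
    (hψ : ContDiffAt ℝ 2 ψ x) (hT : ∀ᶠ y in 𝓝 x, y ∈ T → ψ x ≤ ψ y) :
    -gradient ψ x ∈ proxNormalCone T x := by
  obtain ⟨c, hc, hbound⟩ := hψ.isBigO_sub_sub_fderiv.exists_pos
  refine ⟨c, hc, _, hbound.bound.and hT, fun y ⟨hyT, hy, hyψ⟩ => ?_⟩
  rw [inner_neg_left, inner_gradient_left]
  rw [Real.norm_eq_abs, norm_pow, norm_norm] at hy
  linarith [hyψ hyT, le_abs_self (ψ y - ψ x - fderiv ℝ ψ x (y - x))]

theorem proxNormalCone_complement_eq_cone_neg_gradient_general [FiniteDimensional ℝ E]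
    (S : Set E)
    (x : E) (hx : x ∈ frontier S)
    (U : Set E) (ψ : E → ℝ)
    (hU : IsOpen U) (hxU : x ∈ U)
    (hψ : ContDiffOn ℝ 2 ψ U)
    (hD : ∀ u ∈ U, fderiv ℝ ψ u ≠ 0)
    (hlevel : U ∩ frontier S = U ∩ ψ ⁻¹' {0})
    (hneg : ∀ y ∈ U ∩ S, ψ y ≤ 0)
    (hmeet : ∀ V ∈ 𝓝 x, V ⊆ U → (V ∩ interior S).Nonempty) :
    proxNormalCone (Sᶜ ∪ frontier S) x = {ξ | ∃ l : ℝ, 0 ≤ l ∧ ξ = l • (-(gradient ψ x))} := by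
  have hUx : U ∈ 𝓝 x := hU.mem_nhds hxU
  have hψx : ContDiffAt ℝ 2 ψ x := hψ.contDiffAt hUx
  have hzero : ∀ y ∈ U ∩ frontier S, ψ y = 0 := fun y hy => (hlevel ▸ hy).2
  have hx0 : ψ x = 0 := hzero x ⟨hxU, hx⟩
  have hclosure : x ∈ closure (interior S ∩ {y | ψ y < 0}) := by
    refine mem_closure_iff_nhds.2 fun V hV => ?_
    obtain ⟨p, ⟨hpV, hpU⟩, hpS⟩ := hmeet (V ∩ U) (inter_mem hV hUx) inter_subset_right
    refine ⟨p, hpV, hpS, (hneg p ⟨hpU, interior_subset hpS⟩).lt_of_ne fun hp => ?_⟩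
    exact (hlevel.symm ▸ ⟨hpU, hp⟩ : p ∈ U ∩ frontier S).2.2 hpS
  rw [compl_union_frontier_eq_compl_interior]
  refine Subset.antisymm ?_ ?_
  · refine proxNormalCone_subset_of_eventually_lt_mem
      (hψx.differentiableAt (by norm_num)).hasGradientAt
      (fun h => hD x hxU (by rw [← toDual_gradient, h, map_zero])) ?_
    filter_upwards [hUx] with y hyU hlt hyS
    exact (hneg y ⟨hyU, interior_subset hyS⟩).not_gt (hx0 ▸ hlt)
  · rintro ξ ⟨l, hl, rfl⟩
    refine smul_mem_proxNormalCone (neg_gradient_mem_proxNormalCone hψx ?_) hl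
    filter_upwards [(hψx.of_le (by norm_num)).eventually_nonneg_of_notMem_interior (hD x hxU) hx0
      hUx hzero hclosure] with y hy hyS
    exact hx0 ▸ hy hyS

theorem proxNormalCone_complement_eq_cone_neg_gradient [FiniteDimensional ℝ E]
    (S : Set E) (hS : IsClosed S) (hpr : ProxRegular S)
    (hint : (interior S).Nonempty)
    (x : E) (hx : x ∈ frontier S)
    (U : Set E) (ψ : E → ℝ)
    (hU : IsOpen U) (hxU : x ∈ U)
    (hψ : ContDiffOn ℝ 2 ψ U)
    (hD : ∀ u ∈ U, fderiv ℝ ψ u ≠ 0)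
    (hlevel : U ∩ frontier S = U ∩ ψ ⁻¹' {0})
    (hneg : ∀ y ∈ U ∩ S, ψ y ≤ 0)
    (hmeet : ∀ V ∈ 𝓝 x, V ⊆ U → (V ∩ interior S).Nonempty) :
    proxNormalCone (Sᶜ ∪ frontier S) x = {ξ | ∃ l : ℝ, 0 ≤ l ∧ ξ = l • (-(gradient ψ x))} :=
  proxNormalCone_complement_eq_cone_neg_gradient_general S x hx U ψ hU hxU hψ hD hlevel hneg hmeet
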